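/- Let w ∈ W_{n,q}, let s = LIS(w), and for 1 ≤ t ≤ s let r(w,t) be the largest index such that the longest strictly increasing subsequence of w ending at position r(w,t) has length t. Then the first row of the Hecke insertion tableau P of w is precisely w_{r(w,1)}, w_{r(w,2)}, ..., w_{r(w,s)}. -/

import Mathlib

/-- Replace row `i` of `T` by `r`, appending a new row if `i = T.length`. -/
def setRow (T : List (List ℕ)) (i : ℕ) (r : List ℕ) : List (List ℕ) :=
  if i < T.length then T.set i r else T ++ [r]

/-- One pass of Hecke insertion (BKSTY): insert value `x` starting at row `i`,
with `fuel` bounding the number of rows visited. -/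
def heckeAux : ℕ → ℕ → List (List ℕ) → ℕ → List (List ℕ)
  | 0, _, T, _ => T
  | fuel + 1, x, T, i =>
    let R := T.getD i []
    if R.all (· ≤ x) then
      -- terminating step: adjoin `x` at the end of row `i` if this yields an
      -- increasing tableau, otherwise leave the tableau unchanged
      if (x ∉ R) ∧ (i = 0 ∨ (R.length < (T.getD (i - 1) []).length ∧
            (T.getD (i - 1) []).getD R.length 0 < x)) then
        setRow T i (R ++ [x])
      else T
    else
      -- bumping step: `y` is the smallest entry of the row larger than `x`;
      -- replace it by `x` if this yields an increasing tableau; in any case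
      -- insert `y` into the next row
      let p := (R.takeWhile (· ≤ x)).length
      let y := R.getD p 0
      let T' := if (p = 0 ∨ R.getD (p - 1) 0 < x) ∧
            (i = 0 ∨ (T.getD (i - 1) []).getD p 0 < x) then setRow T i (R.set p x) else T
      heckeAux fuel y T' (i + 1)

/-- Hecke insertion of a value `x` into an increasing tableau `T`. -/
def heckeInsert (T : List (List ℕ)) (x : ℕ) : List (List ℕ) :=
  heckeAux (T.length + 1) x T 0

/-- The insertion tableau `P` of a word under the Hecke algorithm. -/
def heckeP (w : List ℕ) : List (List ℕ) := w.foldl heckeInsert []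

/-- The shape `Heckeshape w` of the Hecke insertion tableau of `w`. -/
def heckeShape (w : List ℕ) : List ℕ := (heckeP w).map List.length

/-- Length of the longest strictly increasing subsequence of a word. -/
noncomputable def LIS (w : List ℕ) : ℕ :=
  sSup {k | ∃ s : List ℕ, s.Sublist w ∧ s.Chain' (· < ·) ∧ s.length = k}

/-- Length of the longest strictly decreasing subsequence of a word. -/
noncomputable def LDS (w : List ℕ) : ℕ :=
  sSup {k | ∃ s : List ℕ, s.Sublist w ∧ s.Chain' (· > ·) ∧ s.length = k}

/-- The length of the longest strictly increasing subsequence of `w` ending at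
(0-indexed) position `i`, i.e. ending with the letter `w_i` within the prefix
`w_0 ⋯ w_i`. -/
noncomputable def LISend (w : List ℕ) (i : ℕ) : ℕ :=
  sSup {k | ∃ s : List ℕ, s.Sublist (w.take (i + 1)) ∧ s.Chain' (· < ·) ∧
    s ≠ [] ∧ s.getLast? = some (w.getD i 0) ∧ s.length = k}

/-- `r w t`: the largest (0-indexed) position such that the longest strictly
increasing subsequence of `w` ending at that position has length `t`. -/
noncomputable def rIdx (w : List ℕ) (t : ℕ) : ℕ :=
  sSup {i | i < w.length ∧ LISend w i = t}

/-!
Row `0` of a tableau is changed by Hecke insertion only at the first step, so the first row of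
`P(w)` is obtained by folding the one-row rule `rowInsert` over `w`. After the prefix `w.take m`
this row has length `LIS (w.take m)`, and its column `t` holds the letter at the last position
`p < m` with `LISend w p = t + 1`.

Everything rests on one monotonicity fact: if `i < j` and `w_i < w_j` then
`LISend w i < LISend w j`. Hence letters with equal `LISend` weakly decrease from left to right,
and the next letter `x = w_m`, with `L = LISend w m`, is larger than the row entries in the
columns before `L - 1`, at most the entry in column `L - 1`, and smaller than the entries after
it. So `rowInsert` puts `x` exactly into column `L - 1`, appending it if the row is shorter.
-/

/-- The effect of `heckeAux` on row `0`, where the conditions on row `i - 1` are vacuous. -/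
def rowInsert (R : List ℕ) (x : ℕ) : List ℕ :=
  if R.all (· ≤ x) then (if x ∈ R then R else R ++ [x])
  else
    let p := (R.takeWhile (· ≤ x)).length
    if p = 0 ∨ R.getD (p - 1) 0 < x then R.set p x else R

lemma setRow_ne_nil {T : List (List ℕ)} (hT : T ≠ []) (i : ℕ) (r : List ℕ) :
    setRow T i r ≠ [] := by
  unfold setRow
  split <;> simp [hT]

lemma setRow_getD_zero_of_pos {T : List (List ℕ)} (hT : T ≠ []) {i : ℕ} (hi : 0 < i)
    (r : List ℕ) : (setRow T i r).getD 0 [] = T.getD 0 [] := by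
  obtain ⟨R, T, rfl⟩ := List.exists_cons_of_ne_nil hT
  obtain ⟨i, rfl⟩ := Nat.exists_eq_add_one_of_ne_zero hi.ne'
  unfold setRow
  split <;> simp

lemma setRow_zero_getD_zero (T : List (List ℕ)) (r : List ℕ) :
    (setRow T 0 r).getD 0 [] = r := by
  cases T <;> simp [setRow]

lemma heckeAux_getD_zero (fuel x : ℕ) {T : List (List ℕ)} (hT : T ≠ []) {i : ℕ}
    (hi : 0 < i) : (heckeAux fuel x T i).getD 0 [] = T.getD 0 [] := by
  induction fuel generalizing x T i with
  | zero => rfl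
  | succ fuel ih =>
    rw [heckeAux]
    dsimp only
    split_ifs
    · exact setRow_getD_zero_of_pos hT hi _
    · rfl
    · rw [ih _ (setRow_ne_nil hT _ _) (by omega), setRow_getD_zero_of_pos hT hi]
    · exact ih _ hT (by omega)

lemma heckeInsert_getD_zero (T : List (List ℕ)) (x : ℕ) :
    (heckeInsert T x).getD 0 [] = rowInsert (T.getD 0 []) x := by
  rw [heckeInsert, heckeAux, rowInsert]
  simp only [true_or, and_true, zero_add]
  set R := T.getD 0 []
  by_cases hall : R.all (· ≤ x)
  · rw [if_pos hall, if_pos hall]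
    by_cases hx : x ∈ R
    · rw [if_neg (not_not.2 hx), if_pos hx]
    · rw [if_pos hx, if_neg hx, setRow_zero_getD_zero]
  · have hT : T ≠ [] := by rintro rfl; simp [R] at hall
    rw [if_neg hall, if_neg hall,
      heckeAux_getD_zero _ _ (by split_ifs <;> simp [hT, setRow_ne_nil]) one_pos]
    split_ifs <;> simp only [setRow_zero_getD_zero, R]

lemma heckeP_getD_zero (w : List ℕ) : (heckeP w).getD 0 [] = w.foldl rowInsert [] := by
  suffices ∀ T, (w.foldl heckeInsert T).getD 0 [] = w.foldl rowInsert (T.getD 0 []) from this []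
  induction w with
  | nil => exact fun _ => rfl
  | cons x w ih => exact fun T => by rw [List.foldl_cons, ih, heckeInsert_getD_zero]; rfl

lemma rowInsert_of_forall_lt {R : List ℕ} {x : ℕ} (h : ∀ y ∈ R, y < x) :
    rowInsert R x = R ++ [x] := by
  have hall : R.all (· ≤ x) := List.all_eq_true.2 fun y hy => decide_eq_true (h y hy).le
  rw [rowInsert, if_pos hall, if_neg fun hx => (h x hx).false]

lemma rowInsert_append_cons {A B : List ℕ} {x y : ℕ} (hA : ∀ a ∈ A, a < x) (hxy : x ≤ y)
    (hB : ∀ b ∈ B, x < b) : rowInsert (A ++ y :: B) x = A ++ x :: B := by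
  have hA' : ∀ a ∈ A, decide (a ≤ x) = true := fun a ha => decide_eq_true (hA a ha).le
  rcases hxy.eq_or_lt with rfl | hxy
  · cases B with
    | nil =>
      have hall : (A ++ [x]).all (· ≤ x) := by simpa using fun a ha => (hA a ha).le
      rw [rowInsert, if_pos hall, if_pos (by simp)]
    | cons b B =>
      have hb := hB b (by simp)
      have hall : (A ++ x :: b :: B).all (· ≤ x) = false :=
        List.all_eq_false.2 ⟨b, by simp, by simpa using hb⟩
      have htake : (A ++ x :: b :: B).takeWhile (· ≤ x) = A ++ [x] := by
        simp [List.takeWhile_append_of_pos hA', hb]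
      simp only [rowInsert, hall, htake]
      simp
  · have hall : (A ++ y :: B).all (· ≤ x) = false :=
      List.all_eq_false.2 ⟨y, by simp, by simpa using hxy⟩
    have htake : (A ++ y :: B).takeWhile (· ≤ x) = A := by
      simp [List.takeWhile_append_of_pos hA', hxy]
    have hprev : A.length = 0 ∨ (A ++ y :: B).getD (A.length - 1) 0 < x := by
      rcases A.eq_nil_or_concat with rfl | ⟨A, a, rfl⟩
      · simp
      · simp [hA a (by simp)]
    simp only [rowInsert, hall, htake, hprev]
    simp

lemma range_add_one_add (k n : ℕ) :
    List.range (k + 1 + n) = List.range k ++ k :: (List.range n).map (k + 1 + ·) := by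
  rw [List.range_add, List.range_succ, List.append_assoc, List.singleton_append]

lemma rowInsert_map_range (f : ℕ → ℕ) {s k x : ℕ} (hk : k ≤ s) (hlt : ∀ t < k, f t < x)
    (hle : k < s → x ≤ f k) (hgt : ∀ t, k < t → t < s → x < f t) :
    rowInsert ((List.range s).map f) x =
      (List.range (max s (k + 1))).map (Function.update f k x) := by
  have hbelow : (List.range k).map (Function.update f k x) = (List.range k).map f :=
    List.map_congr_left fun t ht => Function.update_of_ne (List.mem_range.1 ht).ne _ _
  rcases hk.eq_or_lt with rfl | hks
  · rw [rowInsert_of_forall_lt (by simpa using hlt), max_eq_right (by omega), List.range_succ,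
      List.map_append, hbelow]
    simp
  · obtain ⟨n, rfl⟩ : ∃ n, s = k + 1 + n := ⟨s - (k + 1), by omega⟩
    have habove : ((List.range n).map (k + 1 + ·)).map (Function.update f k x) =
        ((List.range n).map (k + 1 + ·)).map f := by
      simp only [List.map_map]
      exact List.map_congr_left fun t _ => Function.update_of_ne (by simp; omega) _ _
    rw [max_eq_left (by omega), range_add_one_add, List.map_append, List.map_append, List.map_cons,
      List.map_cons, hbelow, habove, Function.update_self]
    refine rowInsert_append_cons (by simpa using hlt) (hle hks) ?_
    simp only [List.map_map, List.mem_map, List.mem_range, Function.comp_apply]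
    rintro _ ⟨t, ht, rfl⟩
    exact hgt _ (by omega) (by omega)

lemma take_add_one_eq_concat {w : List ℕ} {i : ℕ} (hi : i < w.length) :
    w.take (i + 1) = w.take i ++ [w.getD i 0] := by
  rw [List.take_add_one, List.getElem?_eq_getElem hi, List.getD_eq_getElem _ _ hi,
    Option.toList_some]

lemma bddAbove_LISend_set (w : List ℕ) (i : ℕ) :
    BddAbove {k | ∃ s : List ℕ, s.Sublist (w.take (i + 1)) ∧ s.IsChain (· < ·) ∧
      s ≠ [] ∧ s.getLast? = some (w.getD i 0) ∧ s.length = k} :=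
  ⟨i + 1, by
    rintro k ⟨s, hs, -, -, -, rfl⟩
    exact hs.length_le.trans (List.length_take_le _ _)⟩

lemma length_le_LISend {w s : List ℕ} {i : ℕ} (hs : s.Sublist (w.take (i + 1)))
    (hinc : s.IsChain (· < ·)) (hne : s ≠ []) (hlast : s.getLast? = some (w.getD i 0)) :
    s.length ≤ LISend w i :=
  le_csSup (bddAbove_LISend_set w i) ⟨s, hs, hinc, hne, hlast, rfl⟩

lemma singleton_sublist_take {w : List ℕ} {i : ℕ} (hi : i < w.length) :
    [w.getD i 0].Sublist (w.take (i + 1)) := by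
  rw [take_add_one_eq_concat hi]
  exact List.sublist_append_right _ _

lemma one_le_LISend {w : List ℕ} {i : ℕ} (hi : i < w.length) : 1 ≤ LISend w i :=
  length_le_LISend (singleton_sublist_take hi) (List.isChain_singleton _) (by simp) rfl

lemma exists_sublist_length_eq_LISend {w : List ℕ} {i : ℕ} (hi : i < w.length) :
    ∃ s : List ℕ, s.Sublist (w.take (i + 1)) ∧ s.IsChain (· < ·) ∧ s ≠ [] ∧
      s.getLast? = some (w.getD i 0) ∧ s.length = LISend w i := by
  refine Nat.sSup_mem ?_ (bddAbove_LISend_set w i)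
  exact ⟨1, _, singleton_sublist_take hi, List.isChain_singleton _, by simp, rfl, rfl⟩

lemma exists_index_of_sublist_take (w : List ℕ) {s : List ℕ} {v : ℕ} (hne : s ≠ [])
    (hlast : s.getLast? = some v) {i : ℕ} (hs : s.Sublist (w.take i)) :
    ∃ j < i, j < w.length ∧ w.getD j 0 = v ∧ s.Sublist (w.take (j + 1)) := by
  induction i with
  | zero => exact absurd (List.sublist_nil.1 (by simpa using hs)) hne
  | succ i ih =>
    by_cases hi : i < w.length
    · rw [take_add_one_eq_concat hi] at hs
      obtain ⟨l₁, l₂, rfl, h₁, h₂⟩ := List.sublist_append_iff.1 hs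
      rcases List.sublist_singleton.1 h₂ with rfl | rfl
      · obtain ⟨j, hji, hj⟩ := ih (by simpa using h₁)
        exact ⟨j, by omega, hj⟩
      · refine ⟨i, by omega, hi, ?_, by rwa [take_add_one_eq_concat hi]⟩
        simpa [List.getLast?_concat] using hlast
    · rw [List.take_of_length_le (by omega)] at hs
      obtain ⟨j, -, hj⟩ := ih (by rwa [List.take_of_length_le (by omega)])
      exact ⟨j, by omega, hj⟩

lemma LISend_lt_LISend {w : List ℕ} {i j : ℕ} (hij : i < j) (hj : j < w.length)
    (hw : w.getD i 0 < w.getD j 0) : LISend w i < LISend w j := by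
  obtain ⟨s, hs, hinc, hne, hlast, hlen⟩ := exists_sublist_length_eq_LISend (hij.trans hj)
  have hsub : (s ++ [w.getD j 0]).Sublist (w.take (j + 1)) := by
    rw [take_add_one_eq_concat hj]
    refine List.Sublist.append (hs.trans ?_) (List.Sublist.refl _)
    exact (List.take_sublist_take_left (by omega))
  have hinc' : (s ++ [w.getD j 0]).IsChain (· < ·) :=
    hinc.append (List.isChain_singleton _) (by simpa [hlast] using hw)
  have := length_le_LISend hsub hinc' (by simp) List.getLast?_concat
  simp only [List.length_append, List.length_singleton, hlen] at this
  omega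

lemma exists_pred_of_two_le_LISend {w : List ℕ} {i : ℕ} (hi : i < w.length)
    (h2 : 2 ≤ LISend w i) :
    ∃ j < i, w.getD j 0 < w.getD i 0 ∧ LISend w j + 1 = LISend w i := by
  obtain ⟨s, hs, hinc, hne, hlast, hlen⟩ := exists_sublist_length_eq_LISend hi
  rcases s.eq_nil_or_concat with rfl | ⟨s, b, rfl⟩
  · exact absurd rfl hne
  simp only [List.concat_eq_append] at hs hinc hlast hlen
  obtain rfl : b = w.getD i 0 := by simpa using hlast
  rcases s.eq_nil_or_concat with rfl | ⟨t, a, rfl⟩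
  · simp only [List.nil_append, List.length_singleton] at hlen; omega
  simp only [List.concat_eq_append] at hs hinc hlen
  have hab : a < w.getD i 0 := by
    simp only [List.append_assoc, List.singleton_append, List.isChain_append_cons_cons] at hinc
    exact hinc.2.1
  rw [take_add_one_eq_concat hi, List.append_sublist_append_right] at hs
  obtain ⟨j, hji, -, rfl, hsj⟩ :=
    exists_index_of_sublist_take w (by simp) List.getLast?_concat hs
  have hge := length_le_LISend hsj hinc.left_of_append (by simp) List.getLast?_concat
  have hlt := LISend_lt_LISend hji hi hab
  simp only [List.length_append, List.length_singleton] at hlen hge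
  exact ⟨j, hji, hab, by omega⟩

lemma exists_lt_of_lt_LISend {w : List ℕ} {i t : ℕ} (hi : i < w.length) (ht : 1 ≤ t)
    (htL : t < LISend w i) : ∃ j < i, w.getD j 0 < w.getD i 0 ∧ LISend w j = t := by
  induction i using Nat.strong_induction_on with
  | _ i ih =>
    obtain ⟨j, hji, hlt, hLj⟩ := exists_pred_of_two_le_LISend hi (by omega)
    rcases (show t ≤ LISend w j by omega).eq_or_lt with rfl | htj
    · exact ⟨j, hji, hlt, rfl⟩
    · obtain ⟨k, hkj, hk, hLk⟩ := ih j hji (by omega) htj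
      exact ⟨k, hkj.trans hji, hk.trans hlt, hLk⟩

lemma getD_le_of_LISend_eq {w : List ℕ} {i j : ℕ} (hij : i < j) (hj : j < w.length)
    (h : LISend w i = LISend w j) : w.getD j 0 ≤ w.getD i 0 := by
  by_contra! hlt
  exact (LISend_lt_LISend hij hj hlt).ne h

noncomputable def prefixLIS (w : List ℕ) (m : ℕ) : ℕ := (Finset.range m).sup (LISend w)

noncomputable def lastIdx (w : List ℕ) (m t : ℕ) : ℕ := sSup {i | i < m ∧ LISend w i = t}

/-- Column `t` of the first row after inserting `w.take m`; for `m = w.length` it is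
`w_{r(w, t + 1)}`. -/
noncomputable def rowEntry (w : List ℕ) (m t : ℕ) : ℕ := w.getD (lastIdx w m (t + 1)) 0

section Prefixes

variable {w : List ℕ} {m : ℕ}

lemma LISend_le_prefixLIS {i : ℕ} (h : i < m) : LISend w i ≤ prefixLIS w m :=
  Finset.le_sup (Finset.mem_range.2 h)

lemma prefixLIS_succ (w : List ℕ) (m : ℕ) :
    prefixLIS w (m + 1) = max (prefixLIS w m) (LISend w m) := by
  rw [prefixLIS, Finset.range_add_one, Finset.sup_insert, prefixLIS, max_comm]

lemma LISend_le_prefixLIS_add_one (hm : m < w.length) : LISend w m ≤ prefixLIS w m + 1 := by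
  by_contra! h
  obtain ⟨j, hjm, -, hj⟩ := exists_lt_of_lt_LISend hm (by omega) h
  have := LISend_le_prefixLIS (w := w) hjm
  omega

lemma exists_LISend_eq_of_le_prefixLIS (hm : m ≤ w.length) {t : ℕ} (ht : 1 ≤ t)
    (htm : t ≤ prefixLIS w m) : ∃ i < m, LISend w i = t := by
  obtain ⟨i, hi, hmax⟩ := Finset.exists_mem_eq_sup (Finset.range m)
    (Finset.nonempty_range_iff.2 (by
      rintro rfl
      rw [prefixLIS, Finset.range_zero, Finset.sup_empty, bot_eq_zero] at htm
      omega)) (LISend w)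
  rw [Finset.mem_range] at hi
  rcases (show t ≤ LISend w i from hmax ▸ htm).eq_or_lt with rfl | hlt
  · exact ⟨i, hi, rfl⟩
  · obtain ⟨j, hji, -, hj⟩ := exists_lt_of_lt_LISend (by omega) ht hlt
    exact ⟨j, hji.trans hi, hj⟩

lemma le_lastIdx {i t : ℕ} (hi : i < m) (h : LISend w i = t) : i ≤ lastIdx w m t :=
  le_csSup ⟨m, fun _ hj => hj.1.le⟩ ⟨hi, h⟩

lemma lastIdx_mem {t : ℕ} (h : ∃ i < m, LISend w i = t) :
    lastIdx w m t < m ∧ LISend w (lastIdx w m t) = t :=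
  Nat.sSup_mem h ⟨m, fun _ hj => hj.1.le⟩

lemma lastIdx_succ_of_ne {t : ℕ} (h : t ≠ LISend w m) :
    lastIdx w (m + 1) t = lastIdx w m t := by
  unfold lastIdx
  congr 1
  ext i
  simp only [Set.mem_ofPred_eq, Nat.lt_succ_iff_lt_or_eq]
  constructor
  · rintro ⟨hi | rfl, hit⟩
    · exact ⟨hi, hit⟩
    · exact absurd hit.symm h
  · exact fun ⟨hi, hit⟩ => ⟨Or.inl hi, hit⟩

lemma lastIdx_succ_self : lastIdx w (m + 1) (LISend w m) = m :=
  le_antisymm (csSup_le ⟨m, by simp⟩ fun _ hi => Nat.lt_succ_iff.1 hi.1)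
    (le_lastIdx (Nat.lt_succ_self m) rfl)

lemma rowEntry_succ (hm : m < w.length) :
    rowEntry w (m + 1) = Function.update (rowEntry w m) (LISend w m - 1) (w.getD m 0) := by
  funext t
  have h1 := one_le_LISend hm
  rcases eq_or_ne t (LISend w m - 1) with rfl | ht
  · rw [Function.update_self, rowEntry, Nat.sub_add_cancel h1, lastIdx_succ_self]
  · rw [Function.update_of_ne ht, rowEntry, rowEntry, lastIdx_succ_of_ne (by omega)]

lemma rowEntry_le_getD (hm : m ≤ w.length) {i t : ℕ} (hi : i < m) (h : LISend w i = t + 1) :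
    rowEntry w m t ≤ w.getD i 0 := by
  obtain ⟨hlast, hL⟩ := lastIdx_mem ⟨i, hi, h⟩
  rcases (le_lastIdx hi h).eq_or_lt with heq | hlt
  · rw [rowEntry, ← heq]
  · exact getD_le_of_LISend_eq hlt (by omega) (by rw [h, hL])

lemma rowEntry_lt_getD (hm : m < w.length) {t : ℕ} (ht : t + 1 < LISend w m) :
    rowEntry w m t < w.getD m 0 := by
  obtain ⟨j, hjm, hlt, hj⟩ := exists_lt_of_lt_LISend hm (by omega) ht
  exact (rowEntry_le_getD hm.le hjm hj).trans_lt hlt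

lemma getD_le_rowEntry (hm : m < w.length) (hL : LISend w m ≤ prefixLIS w m) :
    w.getD m 0 ≤ rowEntry w m (LISend w m - 1) := by
  have h1 := one_le_LISend hm
  obtain ⟨hlast, hL'⟩ := lastIdx_mem (exists_LISend_eq_of_le_prefixLIS hm.le h1 hL)
  by_contra! hlt
  rw [rowEntry, Nat.sub_add_cancel h1] at hlt
  exact (LISend_lt_LISend hlast hm hlt).ne hL'

lemma getD_lt_rowEntry (hm : m < w.length) {t : ℕ} (hLt : LISend w m < t + 1)
    (ht : t + 1 ≤ prefixLIS w m) : w.getD m 0 < rowEntry w m t := by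
  obtain ⟨hlast, hL'⟩ := lastIdx_mem (exists_LISend_eq_of_le_prefixLIS hm.le (by omega) ht)
  by_contra! hle
  obtain ⟨j, hj, hlt, hLj⟩ :=
    exists_lt_of_lt_LISend (hlast.trans hm) (one_le_LISend hm) (by omega)
  exact (LISend_lt_LISend (hj.trans hlast) hm (hlt.trans_le hle)).ne hLj

lemma foldl_rowInsert_take (hm : m ≤ w.length) :
    (w.take m).foldl rowInsert [] = (List.range (prefixLIS w m)).map (rowEntry w m) := by
  induction m with
  | zero => simp [prefixLIS]
  | succ m ih =>
    have hm' : m < w.length := by omega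
    have h1 := one_le_LISend hm'
    have hstep := rowInsert_map_range (rowEntry w m) (s := prefixLIS w m)
      (k := LISend w m - 1) (x := w.getD m 0)
      (by have := LISend_le_prefixLIS_add_one hm'; omega)
      (fun t ht => rowEntry_lt_getD hm' (by omega))
      (fun hL => getD_le_rowEntry hm' (by omega))
      (fun t ht hts => getD_lt_rowEntry hm' (by omega) (by omega))
    rw [Nat.sub_add_cancel h1] at hstep
    rw [take_add_one_eq_concat hm', List.foldl_concat, ih hm'.le, hstep, rowEntry_succ hm',
      prefixLIS_succ]

end Prefixes

lemma LIS_eq_prefixLIS_length (w : List ℕ) : LIS w = prefixLIS w w.length := by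
  apply le_antisymm
  · refine csSup_le ⟨0, [], List.nil_sublist _, List.isChain_nil, rfl⟩ ?_
    rintro k ⟨s, hs, hinc, rfl⟩
    rcases eq_or_ne s [] with rfl | hne
    · exact Nat.zero_le _
    obtain ⟨j, hj, -, hv, hsj⟩ := exists_index_of_sublist_take w hne
      (List.getLast?_eq_some_getLast hne) (i := w.length) (by rwa [List.take_length])
    exact (length_le_LISend hsj hinc hne (by rw [List.getLast?_eq_some_getLast hne, hv])).trans
      (LISend_le_prefixLIS hj)
  · refine Finset.sup_le fun i hi => ?_
    obtain ⟨s, hs, hinc, -, -, hlen⟩ := exists_sublist_length_eq_LISend (Finset.mem_range.1 hi)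
    exact le_csSup ⟨w.length, by rintro k ⟨s, hs, -, rfl⟩; exact hs.length_le⟩
      ⟨s, hs.trans (List.take_sublist _ _), hinc, hlen⟩

theorem firstRow_eq_rIdx_general (w : List ℕ) :
    (heckeP w).getD 0 [] =
      (List.range (LIS w)).map (fun t => w.getD (rIdx w (t + 1)) 0) := by
  have hrow := foldl_rowInsert_take (le_refl w.length)
  rw [List.take_length] at hrow
  rw [heckeP_getD_zero, hrow, LIS_eq_prefixLIS_length]
  rfl

/-- The first row of the Hecke insertion tableau of `w` is precisely
`w_{r(w,1)}, w_{r(w,2)}, …, w_{r(w,s)}` where `s = LIS w`. -/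
theorem firstRow_eq_rIdx (n q : ℕ) (w : List ℕ) (hlen : w.length = n)
    (hent : ∀ x ∈ w, 1 ≤ x ∧ x ≤ q) :
    (heckeP w).getD 0 [] =
      (List.range (LIS w)).map (fun t => w.getD (rIdx w (t + 1)) 0) :=
  firstRow_eq_rIdx_general w
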